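/- arXiv:1601.07520 — 4 statements merged into one kernel-verified Lean document; each statement's English description precedes it below -/
import Mathlib

section
/- Let x be the unique nonzero solution in (0,1) of exp(-(1-x)/(2x)) = x, and define γ₂ = (2x(1-x))⁻¹. Then γ₂ exists and satisfies 2.45 < γ₂ < 2.46. -/
/-!
Taking logarithms, the fixed points of `t ↦ exp (-(1 - t) / (2t))` in `(0, 1)` are the zeros of
`logGap t = log t + (1 - t) / (2t)`, whose derivative `(2t - 1) / (2t²)` changes sign only at `1/2`.
Since `logGap 1 = 0`, `logGap` is negative on `[1/2, 1)`, and it is strictly decreasing on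
`(0, 1/2]`, so it has at most one zero in `(0, 1)`. Taylor estimates for `exp` show that `logGap`
changes sign on `[0.2842, 0.2853]`, which locates the zero `x` there and pins `(2x(1 - x))⁻¹`
between `2.45` and `2.46`.
-/

open Real Set

noncomputable def logGap (t : ℝ) : ℝ := log t + (1 - t) / (2 * t)

theorem logGap_eq_zero_iff {t : ℝ} (ht : 0 < t) :
    logGap t = 0 ↔ exp (-((1 - t) / (2 * t))) = t := by
  rw [logGap, ← exp_log ht, exp_eq_exp, log_exp]
  constructor <;> intro h <;> linarith

theorem logGap_pos_iff {t : ℝ} (ht : 0 < t) :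
    0 < logGap t ↔ exp (-((1 - t) / (2 * t))) < t := by
  rw [logGap, ← lt_log_iff_exp_lt ht]
  constructor <;> intro h <;> linarith

theorem logGap_neg_iff {t : ℝ} (ht : 0 < t) :
    logGap t < 0 ↔ t < exp (-((1 - t) / (2 * t))) := by
  rw [logGap, ← log_lt_iff_lt_exp ht]
  constructor <;> intro h <;> linarith

theorem logGap_one : logGap 1 = 0 := by norm_num [logGap]

theorem hasDerivAt_logGap {t : ℝ} (ht : 0 < t) :
    HasDerivAt logGap ((2 * t - 1) / (2 * t ^ 2)) t := by
  have hquot : HasDerivAt (fun s : ℝ => (1 - s) / (2 * s)) (-1 / (2 * t ^ 2)) t :=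
    (((hasDerivAt_id' t).const_sub 1).div ((hasDerivAt_id' t).const_mul 2)
      (by positivity)).congr_deriv (by field_simp; ring)
  exact ((hasDerivAt_log ht.ne').add hquot).congr_deriv (by field_simp; ring)

theorem continuousOn_logGap : ContinuousOn logGap (Ioi 0) :=
  fun _ ht => (hasDerivAt_logGap ht).continuousAt.continuousWithinAt

theorem strictAntiOn_logGap : StrictAntiOn logGap (Ioc 0 (1 / 2)) := by
  refine strictAntiOn_of_deriv_neg (convex_Ioc 0 (1 / 2))
    (continuousOn_logGap.mono Ioc_subset_Ioi_self) fun t ht => ?_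
  obtain ⟨ht0, hthalf⟩ : t ∈ Ioo 0 (1 / 2) := by rwa [interior_Ioc] at ht
  rw [(hasDerivAt_logGap ht0).deriv]
  exact div_neg_of_neg_of_pos (by linarith) (by positivity)

theorem strictMonoOn_logGap : StrictMonoOn logGap (Ici (1 / 2)) := by
  have hsub : Ici (1 / 2 : ℝ) ⊆ Ioi 0 := Ici_subset_Ioi.2 one_half_pos
  refine strictMonoOn_of_deriv_pos (convex_Ici (1 / 2))
    (continuousOn_logGap.mono hsub) fun t ht => ?_
  rw [interior_Ici] at ht
  have ht0 : 0 < t := hsub (mem_Ici_of_Ioi ht)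
  rw [(hasDerivAt_logGap ht0).deriv]
  exact div_pos (by linarith [mem_Ioi.1 ht]) (by positivity)

theorem logGap_neg_of_half_le_of_lt_one {t : ℝ} (h : 1 / 2 ≤ t) (h1 : t < 1) : logGap t < 0 :=
  logGap_one ▸ strictMonoOn_logGap h (by norm_num) h1

theorem eq_of_logGap_eq_zero {x y : ℝ} (hx : x ∈ Ioo 0 1) (hy : y ∈ Ioo 0 1)
    (hx0 : logGap x = 0) (hy0 : logGap y = 0) : x = y := by
  have mem_Ioc (z : ℝ) (hz : z ∈ Ioo 0 1) (hz0 : logGap z = 0) : z ∈ Ioc 0 (1 / 2) := by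
    refine ⟨hz.1, not_lt.1 fun hlt => ?_⟩
    exact (logGap_neg_of_half_le_of_lt_one hlt.le hz.2).ne hz0
  exact strictAntiOn_logGap.injOn (mem_Ioc x hx hx0) (mem_Ioc y hy hy0) (hx0.trans hy0.symm)

-- Writing `exp c = e * exp (c - 1)` and using Mathlib's nine-digit bounds on `e` leaves only
-- `exp` near `0.26` to be estimated by a short Taylor polynomial.
theorem logGap_0_2842_pos : 0 < logGap 0.2842 := by
  have hsplit : exp (3579 / 2842) = exp 1 * exp (737 / 2842) := by
    rw [← exp_add]; norm_num
  have htaylor := sum_le_exp_of_nonneg (x := 737 / 2842) (by norm_num) 5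
  norm_num [Finset.sum_range_succ, Nat.factorial] at htaylor
  rw [logGap_pos_iff (by norm_num)]
  norm_num
  rw [exp_neg, inv_lt_comm₀ (exp_pos _) (by norm_num), hsplit]
  calc (1421 / 5000 : ℝ)⁻¹ < 2.7182818283 * exp (737 / 2842) := by norm_num; linarith
    _ < exp 1 * exp (737 / 2842) := by gcongr; exact exp_one_gt_d9

theorem logGap_0_2853_neg : logGap 0.2853 < 0 := by
  have hsplit : exp (7147 / 5706) = exp 1 * exp (1441 / 5706) := by
    rw [← exp_add]; norm_num
  have htaylor := exp_bound' (x := 1441 / 5706) (by norm_num) (by norm_num) (n := 4) (by norm_num)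
  norm_num [Finset.sum_range_succ, Nat.factorial] at htaylor
  rw [logGap_neg_iff (by norm_num)]
  norm_num
  rw [exp_neg, lt_inv_comm₀ (by norm_num) (exp_pos _), hsplit]
  calc exp 1 * exp (1441 / 5706) < 2.7182818286 * exp (1441 / 5706) := by
        gcongr; exact exp_one_lt_d9
    _ < (2853 / 10000)⁻¹ := by norm_num; linarith

theorem exists_logGap_eq_zero_mem_Icc : ∃ x ∈ Icc (0.2842 : ℝ) 0.2853, logGap x = 0 := by
  have hsub : Icc (0.2842 : ℝ) 0.2853 ⊆ Ioi 0 := Icc_subset_Ioi_iff (by norm_num) |>.2 (by norm_num)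
  exact intermediate_value_Icc' (by norm_num) (continuousOn_logGap.mono hsub)
    ⟨logGap_0_2853_neg.le, logGap_0_2842_pos.le⟩

theorem inv_two_mul_mul_one_sub_mem_Ioo {x : ℝ} (hx : x ∈ Icc (0.2842 : ℝ) 0.2853) :
    (2 * x * (1 - x))⁻¹ ∈ Ioo 2.45 2.46 := by
  obtain ⟨hlo, hhi⟩ := hx
  have hpos : 0 < 2 * x * (1 - x) := by nlinarith
  constructor
  · rw [lt_inv_comm₀ (by norm_num) hpos]; nlinarith
  · rw [inv_lt_comm₀ hpos (by norm_num)]; nlinarith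

/-- The collapsibility threshold constant `γ₂`: there is a unique `x ∈ (0,1)` with
`exp (-(1-x)/(2x)) = x`, and `γ₂ = (2x(1-x))⁻¹` satisfies `2.45 < γ₂ < 2.46`. -/
theorem gamma_two_exists_and_bounds :
    ∃ x : ℝ, (x ∈ Set.Ioo (0 : ℝ) 1 ∧ Real.exp (-((1 - x) / (2 * x))) = x) ∧
      (∀ x' : ℝ, x' ∈ Set.Ioo (0 : ℝ) 1 → Real.exp (-((1 - x') / (2 * x'))) = x' → x' = x) ∧
      2.45 < (2 * x * (1 - x))⁻¹ ∧ (2 * x * (1 - x))⁻¹ < 2.46 := by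
  obtain ⟨x, hxI, hx0⟩ := exists_logGap_eq_zero_mem_Icc
  have hx : x ∈ Ioo 0 1 := ⟨by linarith [hxI.1], by linarith [hxI.2]⟩
  refine ⟨x, ⟨hx, (logGap_eq_zero_iff hx.1).1 hx0⟩, fun y hy hfix => ?_,
    inv_two_mul_mul_one_sub_mem_Ioo hxI⟩
  exact eq_of_logGap_eq_zero hy hx ((logGap_eq_zero_iff hy.1).2 hfix) hx0
end

section
/- Let γ₂ be defined via the unique nonzero solution x of exp(-(1-x)/(2x)) = x as γ₂ = (2x(1-x))⁻¹, and let c₂ = (-log y)/(1-y)² where y is the unique root in (0,1) of 3(1-y) + (1+2y)·log y = 0. Then γ₂ < c₂. -/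
/-! Substituting `t = (1 - x) / (2x)` turns the defining equation of `γ₂` into `exp t = 1 + 2t` and
`γ₂` into `t + 1 + 1/(4t)`; substituting `s = -log y` turns that of `c₂` into
`exp s * (3 - s) = 3 + 2s` and `c₂` into `3 / ((1 - y)(1 + 2y))`. Taylor bounds on `exp` locate
`1 ≤ t < 13/10`, so `γ₂ < 5/2`, and `2 < s`, so `y = exp (-s) < 1/5` and `c₂ > 5/2`. -/

open Real

namespace Real

theorem quintic_le_exp_of_nonneg {x : ℝ} (hx : 0 ≤ x) :
    1 + x + x ^ 2 / 2 + x ^ 3 / 6 + x ^ 4 / 24 + x ^ 5 / 120 ≤ exp x := by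
  convert sum_le_exp_of_nonneg hx 6 using 1
  simp [Finset.sum_range_succ, Nat.factorial]

theorem one_le_of_exp_eq_one_add_two_mul {t : ℝ} (ht : 0 < t) (h : exp t = 1 + 2 * t) :
    1 ≤ t := by
  by_contra! ht1
  have hquad := (abs_le.mp (abs_exp_sub_one_sub_id_le (abs_of_pos ht ▸ ht1.le))).2
  nlinarith

theorem lt_thirteen_tenths_of_exp_eq_one_add_two_mul {t : ℝ} (ht : 0 < t) (h : exp t = 1 + 2 * t) :
    t < 13 / 10 := by
  by_contra! ht1
  have htaylor := quintic_le_exp_of_nonneg ht.le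
  have hcubic : 1 < t / 2 + t ^ 2 / 6 + t ^ 3 / 24 := by nlinarith
  nlinarith [pow_pos ht 5]

theorem two_lt_of_exp_mul_three_sub_eq {s : ℝ} (hs : 0 < s) (h : exp s * (3 - s) = 3 + 2 * s) :
    2 < s := by
  by_contra! hs2
  have htaylor := mul_le_mul_of_nonneg_right (quintic_le_exp_of_nonneg hs.le)
    (by linarith : (0 : ℝ) ≤ 3 - s)
  rw [h] at htaylor
  -- the Taylor polynomial times `3 - s` exceeds `3 + 2s` by `s²(60 - 5s² - 2s³ - s⁴)/120`
  have hpos : 0 < 60 - 5 * s ^ 2 - 2 * s ^ 3 - s ^ 4 := by nlinarith [pow_pos hs 2, pow_pos hs 3]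
  nlinarith [mul_pos (pow_pos hs 2) hpos]

end Real

theorem gamma_two_lt_five_halves {x : ℝ} (hx : x ∈ Set.Ioo (0 : ℝ) 1)
    (h : exp (-((1 - x) / (2 * x))) = x) : (2 * x * (1 - x))⁻¹ < 5 / 2 := by
  obtain ⟨hx0, hx1⟩ := hx
  obtain ⟨t, ht⟩ : ∃ t, (1 - x) / (2 * x) = t := ⟨_, rfl⟩
  rw [ht] at h
  have ht0 : 0 < t := ht ▸ div_pos (by linarith) (by linarith)
  have hxt : x * (1 + 2 * t) = 1 := by rw [← ht]; field_simp; ring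
  have hexp : exp t = 1 + 2 * t := by
    rw [← mul_right_inj' hx0.ne', hxt, ← h, ← exp_add, neg_add_cancel, exp_zero]
  have ht1 := one_le_of_exp_eq_one_add_two_mul ht0 hexp
  have ht13 := lt_thirteen_tenths_of_exp_eq_one_add_two_mul ht0 hexp
  have hγ : (2 * x * (1 - x))⁻¹ = (1 + 2 * t) ^ 2 / (4 * t) := by
    have h1x : 1 - x = 2 * t * x := by linear_combination -hxt
    rw [h1x, eq_div_iff (by positivity)]
    field_simp
    linear_combination -4 * (x * (1 + 2 * t) + 1) * hxt
  rw [hγ, div_lt_iff₀ (by positivity)]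
  nlinarith

theorem five_halves_lt_c_two {y : ℝ} (hy : y ∈ Set.Ioo (0 : ℝ) 1)
    (h : 3 * (1 - y) + (1 + 2 * y) * log y = 0) : 5 / 2 < (-log y) / (1 - y) ^ 2 := by
  obtain ⟨hy0, hy1⟩ := hy
  obtain ⟨s, hs⟩ : ∃ s, -log y = s := ⟨_, rfl⟩
  have hs0 : 0 < s := hs ▸ neg_pos.mpr (log_neg hy0 hy1)
  have hys : y * exp s = 1 := by rw [← hs, exp_neg, exp_log hy0, mul_inv_cancel₀ hy0.ne']
  have hsy : s * (1 + 2 * y) = 3 * (1 - y) := by rw [← hs]; linarith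
  have hexp : exp s * (3 - s) = 3 + 2 * s := by
    linear_combination -exp s * hsy + (2 * s + 3) * hys
  have hexp5 : 5 < exp s := by
    nlinarith [quadratic_le_exp_of_nonneg hs0.le, two_lt_of_exp_mul_three_sub_eq hs0 hexp]
  have hy5 : y < 1 / 5 := by nlinarith
  rw [hs, lt_div_iff₀ (by nlinarith)]
  nlinarith [mul_pos hy0 hy0]

/-- `γ₂ < c₂`, where `γ₂ = (2x(1-x))⁻¹` for the unique nonzero solution `x ∈ (0,1)` of
`exp (-(1-x)/(2x)) = x`, and `c₂ = (-log y)/(1-y)²` for the unique root `y ∈ (0,1)` of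
`3(1-y) + (1+2y) log y = 0`. -/
theorem gamma_two_lt_c_two :
    ∀ x y : ℝ,
      x ∈ Set.Ioo (0 : ℝ) 1 → Real.exp (-((1 - x) / (2 * x))) = x →
      y ∈ Set.Ioo (0 : ℝ) 1 → 3 * (1 - y) + (1 + 2 * y) * Real.log y = 0 →
      (2 * x * (1 - x))⁻¹ < (-Real.log y) / (1 - y) ^ 2 :=
  fun _ _ hx hγ hy hc => (gamma_two_lt_five_halves hx hγ).trans (five_halves_lt_c_two hy hc)
end

section
/- Let Y be a finite 2-dimensional simplicial complex and let R_∞(Y) be the complex obtained by repeatedly performing elementary collapses at free edges until no free edges remain. Then every core subcomplex of Y is a subcomplex of R_∞(Y); in particular, the cores of Y and of R_∞(Y) coincide. -/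
open scoped Classical

/-- A core: a nonempty pure 2-dimensional complex (given by its set of triangles) in which
every edge of every triangle is contained in at least two triangles. -/
def IsCore {V : Type*} [DecidableEq V] (K : Finset (Finset V)) : Prop :=
  K.Nonempty ∧ (∀ s ∈ K, s.card = 3) ∧
    ∀ s ∈ K, ∀ e ⊆ s, e.card = 2 → 2 ≤ (K.filter fun t => e ⊆ t).card

/-- An elementary collapse at a free edge `e`: remove `e` and the unique triangle `σ`
containing it. -/
def ElemCollapse {V : Type*} [DecidableEq V] (Y Y' : Finset (Finset V)) : Prop :=
  ∃ e σ : Finset V, e ∈ Y ∧ σ ∈ Y ∧ e.card = 2 ∧ σ.card = 3 ∧ e ⊆ σ ∧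
    (Y.filter fun s => e ⊆ s ∧ s.card = 3) = {σ} ∧ Y' = (Y.erase e).erase σ

/-- `Z` has no free edges. -/
def NoFreeEdges {V : Type*} [DecidableEq V] (Z : Finset (Finset V)) : Prop :=
  ∀ e ∈ Z, e.card = 2 → (Z.filter fun s => e ⊆ s ∧ s.card = 3).card ≠ 1

namespace ElemCollapse

variable {V : Type*} [DecidableEq V] {Y Y' : Finset (Finset V)}

lemma subset (h : ElemCollapse Y Y') : Y' ⊆ Y := by
  obtain ⟨e, σ, -, -, -, -, -, -, rfl⟩ := h
  exact (Finset.erase_subset _ _).trans (Finset.erase_subset _ _)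

/-- A core contained in `Y` survives a collapse: its triangle `σ` would contain the free edge `e`,
but in a core `e` lies in at least two triangles, all of them triangles of `Y`. -/
lemma subset_of_isCore {K : Finset (Finset V)} (h : ElemCollapse Y Y') (hK : IsCore K)
    (hKY : K ⊆ Y) : K ⊆ Y' := by
  obtain ⟨e, σ, -, -, he, -, heσ, hfree, rfl⟩ := h
  obtain ⟨-, hK3, hKedge⟩ := hK
  intro s hs
  have hsσ : s ≠ σ := by
    rintro rfl
    have hcover : (K.filter fun t => e ⊆ t) ⊆ {s} := by
      rw [← hfree]
      intro t ht
      rw [Finset.mem_filter] at ht ⊢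
      exact ⟨hKY ht.1, ht.2, hK3 t ht.1⟩
    have := (hKedge s hs e heσ he).trans (Finset.card_le_card hcover)
    rw [Finset.card_singleton] at this
    omega
  have hse : s ≠ e := by
    rintro rfl
    have := hK3 s hs
    omega
  exact Finset.mem_erase.mpr ⟨hsσ, Finset.mem_erase.mpr ⟨hse, hKY hs⟩⟩

lemma isCore_subset_iff {K : Finset (Finset V)} (h : ElemCollapse Y Y') (hK : IsCore K) :
    K ⊆ Y ↔ K ⊆ Y' :=
  ⟨h.subset_of_isCore hK, fun hKY' => hKY'.trans h.subset⟩

end ElemCollapse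

theorem cores_unaffected_by_collapses_general {V : Type*} [DecidableEq V]
    (Y Z : Finset (Finset V))
    (hcollapse : Relation.ReflTransGen ElemCollapse Y Z) :
    ∀ K : Finset (Finset V), IsCore K → (K ⊆ Y ↔ K ⊆ Z) := by
  intro K hK
  induction hcollapse with
  | refl => rfl
  | tail _ h ih => exact ih.trans (h.isCore_subset_iff hK)

/-- If `Z = R_∞(Y)` is obtained from a finite 2-complex `Y` by repeatedly collapsing free
edges until none remain, then every core subcomplex of `Y` is a subcomplex of `Z`; in
particular the cores of `Y` and of `Z` coincide. -/
theorem cores_unaffected_by_collapses {V : Type*} [DecidableEq V]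
    (Y Z : Finset (Finset V))
    (hcomplex : ∀ s ∈ Y, ∀ t ⊆ s, t.Nonempty → t ∈ Y)
    (hdim : ∀ s ∈ Y, s.card ≤ 3)
    (hcollapse : Relation.ReflTransGen ElemCollapse Y Z)
    (hstable : NoFreeEdges Z) :
    ∀ K : Finset (Finset V), IsCore K → (K ⊆ Y ↔ K ⊆ Z) :=
  cores_unaffected_by_collapses_general Y Z hcollapse
end

section
/- Let Y be a finite 2-dimensional simplicial complex such that every core subcomplex of Y contains a tetrahedron boundary, and such that all tetrahedron boundaries in Y are pairwise face-disjoint (no two share a 2-face). Let Z be obtained from Y by deleting exactly one 2-face from each tetrahedron boundary of Y. Then Z has no core subcomplex, hence Z is 2-collapsible. -/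
/-!
A core of `Z` would be a core of `Y`, hence contain a whole tetrahedron boundary of `Y`,
including the triangle deleted from it. A complex without cores collapses: its triangles do not
form a core, so some edge lies in exactly one triangle, and collapsing that free edge leaves a
complex with fewer triangles and still without cores.
-/

open scoped Classical

/-- A tetrahedron boundary of `Y`, identified with its 4-element vertex set. -/
def IsTetraBoundary {V : Type*} [DecidableEq V] (Y : Finset (Finset V)) (T : Finset V) : Prop :=
  T.card = 4 ∧ ∀ s ⊆ T, s.card = 3 → s ∈ Y

/-- 2-collapsibility. -/
def Collapsible2 {V : Type*} [DecidableEq V] (Y : Finset (Finset V)) : Prop :=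
  ∃ Z : Finset (Finset V), Relation.ReflTransGen ElemCollapse Y Z ∧ ∀ s ∈ Z, s.card ≤ 2

open Finset

section

variable {V : Type*}

/-- A simplicial complex of dimension at most two: faces are vertex sets of size at most three. -/
structure IsComplex2 (W : Finset (Finset V)) : Prop where
  down_closed : ∀ s ∈ W, ∀ t ⊆ s, t.Nonempty → t ∈ W
  card_le_three : ∀ s ∈ W, s.card ≤ 3

def triangles (W : Finset (Finset V)) : Finset (Finset V) :=
  W.filter fun s => s.card = 3

theorem exists_free_edge_of_not_isCore [DecidableEq V] {K : Finset (Finset V)} (hK : K.Nonempty)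
    (hK3 : ∀ s ∈ K, s.card = 3) (hnc : ¬ IsCore K) :
    ∃ s ∈ K, ∃ e ⊆ s, e.card = 2 ∧ (K.filter fun t => e ⊆ t) = {s} := by
  obtain ⟨s, hs, e, hes, he2, hlt⟩ : ∃ s ∈ K, ∃ e ⊆ s, e.card = 2 ∧
      (K.filter fun t => e ⊆ t).card < 2 := by
    unfold IsCore at hnc
    push Not at hnc
    exact hnc hK hK3
  have hsmem : s ∈ K.filter fun t => e ⊆ t := mem_filter.2 ⟨hs, hes⟩
  exact ⟨s, hs, e, hes, he2, eq_singleton_iff_unique_mem.2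
    ⟨hsmem, fun t ht => card_le_one.1 (by omega) t ht s hsmem⟩⟩

namespace IsComplex2

variable {W : Finset (Finset V)}

theorem filter (hW : IsComplex2 W) (p : Finset V → Prop) [DecidablePred p]
    (hp : ∀ s ∈ W, ¬ p s → s.card = 3) : IsComplex2 (W.filter p) := by
  refine ⟨fun t ht u hut hu => ?_, fun t ht => hW.card_le_three t (mem_of_mem_filter t ht)⟩
  obtain ⟨htW, hpt⟩ := mem_filter.1 ht
  have huW := hW.down_closed t htW u hut hu
  refine mem_filter.2 ⟨huW, ?_⟩
  by_contra hpu
  rw [← eq_of_subset_of_card_le hut (hp u huW hpu ▸ hW.card_le_three t htW)] at hpt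
  exact hpu hpt

variable [DecidableEq V] {e s : Finset V}

theorem elemCollapse (hW : IsComplex2 W) (hs : s ∈ W) (hs3 : s.card = 3) (hes : e ⊆ s)
    (he2 : e.card = 2) (hfree : (W.filter fun t => e ⊆ t ∧ t.card = 3) = {s}) :
    ElemCollapse W ((W.erase e).erase s) :=
  ⟨e, s, hW.down_closed s hs e hes (card_pos.1 (by omega)), hs, he2, hs3, hes, hfree, rfl⟩

theorem erase_free_edge (hW : IsComplex2 W) (hs : s ∈ W) (hs3 : s.card = 3) (he2 : e.card = 2)
    (hfree : (W.filter fun t => e ⊆ t ∧ t.card = 3) = {s}) :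
    IsComplex2 ((W.erase e).erase s) := by
  have hcofaces : ∀ t ∈ W, e ⊆ t → t ≠ e → t = s := by
    intro t ht het hte
    have ht3 : t.card = 3 := by
      have := card_lt_card (ssubset_of_subset_of_ne het (Ne.symm hte))
      have := hW.card_le_three t ht
      omega
    have ht' : t ∈ W.filter fun t => e ⊆ t ∧ t.card = 3 := mem_filter.2 ⟨ht, het, ht3⟩
    simpa [hfree] using ht'
  refine ⟨fun t ht u hut hu => ?_, fun t ht => hW.card_le_three t (mem_of_mem_erase
    (mem_of_mem_erase ht))⟩
  obtain ⟨hts, hte, htW⟩ : t ≠ s ∧ t ≠ e ∧ t ∈ W := by simpa using ht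
  have hus : u ≠ s := by
    rintro rfl
    exact hts (eq_of_subset_of_card_le hut (hs3 ▸ hW.card_le_three t htW)).symm
  have hue : u ≠ e := by
    rintro rfl
    exact hts (hcofaces t htW hut hte)
  simpa [hus, hue] using hW.down_closed t htW u hut hu

theorem collapsible2_of_forall_not_isCore (hW : IsComplex2 W) (hnc : ∀ K ⊆ W, ¬ IsCore K) :
    Collapsible2 W := by
  induction hn : (triangles W).card using Nat.strong_induction_on generalizing W with
  | _ n ih =>
  by_cases hK : (triangles W).Nonempty
  · obtain ⟨s, hs, e, hes, he2, hfree⟩ := exists_free_edge_of_not_isCore hK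
      (fun s hs => (mem_filter.1 hs).2) (hnc _ (filter_subset _ _))
    obtain ⟨hsW, hs3⟩ := mem_filter.1 hs
    replace hfree : (W.filter fun t => e ⊆ t ∧ t.card = 3) = {s} := by
      simpa only [triangles, filter_filter, and_comm] using hfree
    have hsub : (W.erase e).erase s ⊆ W := (erase_subset _ _).trans (erase_subset _ _)
    have hfewer : (triangles ((W.erase e).erase s)).card < n := by
      refine hn ▸ card_lt_card (ssubset_iff_of_subset (monotone_filter_left _ hsub) |>.2 ?_)
      exact ⟨s, hs, by simp⟩
    obtain ⟨Z, hWZ, hZ⟩ := ih _ hfewer (hW.erase_free_edge hsW hs3 he2 hfree)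
      (fun K hK => hnc K (hK.trans hsub)) rfl
    exact ⟨Z, .head (hW.elemCollapse hsW hs3 hes he2 hfree) hWZ, hZ⟩
  · refine ⟨W, .refl, fun t ht => ?_⟩
    have := hW.card_le_three t ht
    have : t.card ≠ 3 := fun ht3 => hK ⟨t, mem_filter.2 ⟨ht, ht3⟩⟩
    omega

end IsComplex2

end

theorem no_core_after_deletion_general {V : Type*} [DecidableEq V]
    (Y Z : Finset (Finset V))
    (hcomplex : ∀ s ∈ Y, ∀ t ⊆ s, t.Nonempty → t ∈ Y)
    (hdim : ∀ s ∈ Y, s.card ≤ 3)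
    (hcore : ∀ K ⊆ Y, IsCore K →
      ∃ T : Finset V, IsTetraBoundary Y T ∧ ∀ s ⊆ T, s.card = 3 → s ∈ K)
    (f : Finset V → Finset V)
    (hf : ∀ T : Finset V, IsTetraBoundary Y T → f T ⊆ T ∧ (f T).card = 3)
    (hZ : Z = Y.filter fun s => ¬ ∃ T : Finset V, IsTetraBoundary Y T ∧ s = f T) :
    (∀ K ⊆ Z, ¬ IsCore K) ∧ Collapsible2 Z := by
  have hZY : Z ⊆ Y := hZ ▸ filter_subset _ _
  have hnc : ∀ K ⊆ Z, ¬ IsCore K := by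
    intro K hKZ hK
    obtain ⟨T, hT, hTK⟩ := hcore K (hKZ.trans hZY) hK
    have hfTZ : f T ∈ Z := hKZ (hTK _ (hf T hT).1 (hf T hT).2)
    rw [hZ, mem_filter] at hfTZ
    exact hfTZ.2 ⟨T, hT, rfl⟩
  have hZc : IsComplex2 Z := hZ ▸ IsComplex2.filter ⟨hcomplex, hdim⟩ _ fun s _ hs => by
    obtain ⟨T, hT, rfl⟩ := not_not.1 hs
    exact (hf T hT).2
  exact ⟨hnc, hZc.collapsible2_of_forall_not_isCore hnc⟩

/-- If every core of `Y` contains a tetrahedron boundary and all tetrahedron boundaries of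
`Y` are pairwise face-disjoint, then the complex `Z` obtained by deleting exactly one 2-face
from each tetrahedron boundary of `Y` has no core subcomplex, hence is 2-collapsible. -/
theorem no_core_after_deletion {V : Type*} [DecidableEq V]
    (Y Z : Finset (Finset V))
    (hcomplex : ∀ s ∈ Y, ∀ t ⊆ s, t.Nonempty → t ∈ Y)
    (hdim : ∀ s ∈ Y, s.card ≤ 3)
    (hcore : ∀ K ⊆ Y, IsCore K →
      ∃ T : Finset V, IsTetraBoundary Y T ∧ ∀ s ⊆ T, s.card = 3 → s ∈ K)
    (hdisj : ∀ T₁ T₂ : Finset V, IsTetraBoundary Y T₁ → IsTetraBoundary Y T₂ → T₁ ≠ T₂ →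
      ¬ ∃ s : Finset V, s.card = 3 ∧ s ⊆ T₁ ∧ s ⊆ T₂)
    (f : Finset V → Finset V)
    (hf : ∀ T : Finset V, IsTetraBoundary Y T → f T ⊆ T ∧ (f T).card = 3)
    (hZ : Z = Y.filter fun s => ¬ ∃ T : Finset V, IsTetraBoundary Y T ∧ s = f T) :
    (∀ K ⊆ Z, ¬ IsCore K) ∧ Collapsible2 Z :=
  no_core_after_deletion_general Y Z hcomplex hdim hcore f hf hZ
end
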